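/- Suppose S and T are compact topological spaces equipped with Borel measures, each ψ_m : S → ℝ and φ_k : T → ℝ is continuous, and the functions γ_{KM}(s,t) = Σ_{k=1}^{K} Σ_{m=1}^{M} |σ_{km} ψ_m(s) φ_k(t)|/ρ_m converge pointwise, as K, M → ∞, to a continuous function γ on S × T. Then the partial sums β_{KM}(s,t) = Σ_{k=1}^{K} Σ_{m=1}^{M} (σ_{km}/ρ_m) ψ_m(s) φ_k(t) converge uniformly on S × T as K, M → ∞: there exists a function β : S × T → ℝ such that sup_{(s,t)∈S×T} |β_{KM}(s,t) − β(s,t)| → 0. -/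
import Mathlib

open Finset Filter Topology

/-- Under (A2): if the absolute partial sums `γ_{KM}(s,t) = Σ_{k≤K} Σ_{m≤M} |σ_{km} ψ_m(s) φ_k(t)|/ρ_m`
converge pointwise to a continuous function `γ` on the compact set `S × T`, then the partial sums
`β_{KM}(s,t) = Σ_{k≤K} Σ_{m≤M} (σ_{km}/ρ_m) ψ_m(s) φ_k(t)` converge uniformly on `S × T`. -/
theorem partial_sums_converge_uniformly
    {S T : Type*} [TopologicalSpace S] [TopologicalSpace T]
    [CompactSpace S] [CompactSpace T]
    (ψ : ℕ → S → ℝ) (φ : ℕ → T → ℝ) (σ : ℕ → ℕ → ℝ) (ρ : ℕ → ℝ)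
    (hρ : ∀ m, 0 < ρ m)
    (hψc : ∀ m, Continuous (ψ m)) (hφc : ∀ k, Continuous (φ k))
    (γ : S × T → ℝ) (hγc : Continuous γ)
    (hγpt : ∀ (s : S) (t : T), ∀ ε > (0 : ℝ), ∃ N : ℕ, ∀ K ≥ N, ∀ M ≥ N,
      |(∑ k ∈ range K, ∑ m ∈ range M, |σ k m * ψ m s * φ k t| / ρ m) - γ (s, t)| < ε) :
    ∃ β : S × T → ℝ, ∀ ε > (0 : ℝ), ∃ N : ℕ, ∀ K ≥ N, ∀ M ≥ N, ∀ (s : S) (t : T),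
      |(∑ k ∈ range K, ∑ m ∈ range M, (σ k m / ρ m) * ψ m s * φ k t) - β (s, t)| < ε := by
  classical
  set B : ℕ → ℕ → S × T → ℝ :=
    fun K M x => ∑ k ∈ range K, ∑ m ∈ range M, (σ k m / ρ m) * ψ m x.1 * φ k x.2 with hBdef
  set G : ℕ → ℕ → S × T → ℝ :=
    fun K M x => ∑ k ∈ range K, ∑ m ∈ range M, |σ k m * ψ m x.1 * φ k x.2| / ρ m with hGdef
  have hBp : ∀ K M x, B K M x
      = ∑ p ∈ range K ×ˢ range M, (σ p.1 p.2 / ρ p.2) * ψ p.2 x.1 * φ p.1 x.2 := by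
    intro K M x; rw [Finset.sum_product]
  have hGp : ∀ K M x, G K M x
      = ∑ p ∈ range K ×ˢ range M, |σ p.1 p.2 * ψ p.2 x.1 * φ p.1 x.2| / ρ p.2 := by
    intro K M x; rw [Finset.sum_product]
  have habs : ∀ (k m : ℕ) (x : S × T),
      |(σ k m / ρ m) * ψ m x.1 * φ k x.2| = |σ k m * ψ m x.1 * φ k x.2| / ρ m := by
    intro k m x
    rw [abs_mul, abs_mul, abs_div, abs_of_pos (hρ m), abs_mul, abs_mul]
    ring
  have hGnn : ∀ (k m : ℕ) (x : S × T), 0 ≤ |σ k m * ψ m x.1 * φ k x.2| / ρ m :=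
    fun k m x => div_nonneg (abs_nonneg _) (hρ m).le
  have hsub : ∀ {K K' M M' : ℕ}, K ≤ K' → M ≤ M' →
      range K ×ˢ range M ⊆ range K' ×ˢ range M' := fun hK hM =>
    Finset.product_subset_product (Finset.range_subset_range.2 hK) (Finset.range_subset_range.2 hM)
  have key : ∀ {K K' M M' : ℕ}, K ≤ K' → M ≤ M' → ∀ x,
      |B K' M' x - B K M x| ≤ G K' M' x - G K M x := by
    intro K K' M M' hK hM x
    rw [hBp, hBp, hGp, hGp, ← Finset.sum_sdiff_eq_sub (hsub hK hM),
      ← Finset.sum_sdiff_eq_sub (hsub hK hM)]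
    calc |∑ p ∈ range K' ×ˢ range M' \ range K ×ˢ range M,
            (σ p.1 p.2 / ρ p.2) * ψ p.2 x.1 * φ p.1 x.2|
        ≤ ∑ p ∈ range K' ×ˢ range M' \ range K ×ˢ range M,
            |(σ p.1 p.2 / ρ p.2) * ψ p.2 x.1 * φ p.1 x.2| := Finset.abs_sum_le_sum_abs _ _
      _ = ∑ p ∈ range K' ×ˢ range M' \ range K ×ˢ range M,
            |σ p.1 p.2 * ψ p.2 x.1 * φ p.1 x.2| / ρ p.2 :=
          Finset.sum_congr rfl fun p _ => habs p.1 p.2 x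
  have hGmono : ∀ {K K' M M' : ℕ}, K ≤ K' → M ≤ M' → ∀ x, G K M x ≤ G K' M' x := by
    intro K K' M M' hK hM x
    rw [hGp, hGp]
    exact Finset.sum_le_sum_of_subset_of_nonneg (hsub hK hM) fun p _ _ => hGnn p.1 p.2 x
  have hGtend : ∀ x : S × T, Tendsto (fun L => G L L x) atTop (𝓝 (γ x)) := by
    intro x
    rw [Metric.tendsto_atTop]
    intro ε hε
    obtain ⟨N, hN⟩ := hγpt x.1 x.2 ε hε
    exact ⟨N, fun L hL => by simpa [Real.dist_eq, hGdef] using hN L hL L hL⟩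
  have hGle : ∀ K M x, G K M x ≤ γ x := by
    intro K M x
    have h1 : G K M x ≤ G (max K M) (max K M) x :=
      hGmono (le_max_left _ _) (le_max_right _ _) x
    have h2 : G (max K M) (max K M) x ≤ γ x := by
      refine ge_of_tendsto (hGtend x) ?_
      filter_upwards [eventually_ge_atTop (max K M)] with L hL
      exact hGmono hL hL x
    linarith
  have hGdiff0 : ∀ x : S × T, Tendsto (fun L => γ x - G L L x) atTop (𝓝 0) := by
    intro x
    simpa using Tendsto.const_sub (γ x) (hGtend x)
  have hcau : ∀ x : S × T, ∃ b : ℝ, Tendsto (fun L => B L L x) atTop (𝓝 b) := by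
    intro x
    apply cauchySeq_tendsto_of_complete
    apply cauchySeq_of_le_tendsto_0 (fun N => γ x - G N N x) ?_ (hGdiff0 x)
    intro n m N hn hm
    show dist (B n n x) (B m m x) ≤ γ x - G N N x
    rcases le_total n m with h | h
    · have h1 := key h h x
      have h2 := hGmono hn hn x
      have h3 := hGle m m x
      rw [Real.dist_eq, abs_sub_comm]
      linarith
    · have h1 := key h h x
      have h2 := hGmono hm hm x
      have h3 := hGle n n x
      rw [Real.dist_eq]
      linarith
  choose β hβ using hcau
  refine ⟨β, ?_⟩
  intro ε hε
  have hε2 : (0:ℝ) < ε / 2 := by positivity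
  -- Dini-type step via compactness
  have hGc : ∀ L : ℕ, Continuous (fun x : S × T => G L L x) := by
    intro L
    apply continuous_finset_sum
    intro k _
    apply continuous_finset_sum
    intro m _
    exact (((continuous_const.mul ((hψc m).comp continuous_fst)).mul
      ((hφc k).comp continuous_snd)).abs).div_const (ρ m)
  obtain ⟨N, hN⟩ : ∃ N : ℕ, ∀ x : S × T, γ x - G N N x < ε / 2 := by
    have hpt : ∀ x : S × T, ∃ n, γ x - G n n x < ε / 2 := fun x =>
      ((hGdiff0 x).eventually (gt_mem_nhds hε2)).exists
    choose Nx hNx using hpt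
    have hUopen : ∀ x : S × T, IsOpen {y : S × T | γ y - G (Nx x) (Nx x) y < ε / 2} :=
      fun x => isOpen_lt (hγc.sub (hGc (Nx x))) continuous_const
    have hcover : (Set.univ : Set (S × T)) ⊆
        ⋃ x, {y : S × T | γ y - G (Nx x) (Nx x) y < ε / 2} :=
      fun y _ => Set.mem_iUnion.2 ⟨y, hNx y⟩
    obtain ⟨t, ht⟩ := isCompact_univ.elim_finite_subcover _ hUopen hcover
    refine ⟨t.sup Nx, fun y => ?_⟩
    obtain ⟨x, hx, hy⟩ := Set.mem_iUnion₂.1 (ht (Set.mem_univ y))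
    have hmono := hGmono (Finset.le_sup (f := Nx) hx) (Finset.le_sup (f := Nx) hx) y
    have hy' : γ y - G (Nx x) (Nx x) y < ε / 2 := hy
    linarith
  refine ⟨N, fun K hK M hM s t => ?_⟩
  have hlim : ∀ᶠ L in atTop, |B K M (s, t) - B L L (s, t)| ≤ γ (s, t) - G N N (s, t) := by
    filter_upwards [eventually_ge_atTop (max K M)] with L hL
    have h1 := key (le_trans (le_max_left K M) hL) (le_trans (le_max_right K M) hL) (s, t)
    have h2 := hGmono hK hM (s, t)
    have h3 := hGle L L (s, t)
    rw [abs_sub_comm]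
    linarith
  have hfin : |B K M (s, t) - β (s, t)| ≤ γ (s, t) - G N N (s, t) := by
    have htend : Tendsto (fun L => |B K M (s, t) - B L L (s, t)|) atTop
        (𝓝 |B K M (s, t) - β (s, t)|) := (tendsto_const_nhds.sub (hβ (s, t))).abs
    exact le_of_tendsto htend hlim
  have hNst := hN (s, t)
  show |B K M (s, t) - β (s, t)| < ε
  linarith
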